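/- Let n ≥ 2, let A ⊆ S^{n−1} be Borel measurable, symmetric (A = −A), and avoiding orthogonality, let X = {x₁, −x₁, …, x_N, −x_N} ⊆ S^{n−1} be a finite symmetric set, and let Y, Z ⊆ {1, …, N} be geometrically congruent, i.e., there exists S ∈ O(n) with S({±x_i : i ∈ Y}) = {±x_j : j ∈ Z}. Then the sum of a_X(I) over all independent sets I of G_X with Y ⊆ I equals the sum of a_X(I) over all independent sets I of G_X with Z ⊆ I. -/

import Mathlib

open MeasureTheory Metric Finset
open scoped RealInnerProductSpace ENNReal Classical

noncomputable section

/-- The Borel measurable-space structure on `n × n` real matrices. -/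
instance matrixMeasurableSpace (n : ℕ) : MeasurableSpace (Matrix (Fin n) (Fin n) ℝ) := borel _

/-- The orthogonal group `O(n)`, as the group of `n × n` orthogonal real matrices. -/
abbrev OrthGroup (n : ℕ) := Matrix.orthogonalGroup (Fin n) ℝ

/-- The natural action of an orthogonal matrix `T ∈ O(n)` on a vector `x ∈ ℝⁿ`. -/
def act {n : ℕ} (T : OrthGroup n) (x : EuclideanSpace ℝ (Fin n)) : EuclideanSpace ℝ (Fin n) :=
  Matrix.toEuclideanLin (T : Matrix (Fin n) (Fin n) ℝ) x

/-- The unit sphere `S^{n-1} = {x ∈ ℝⁿ : ‖x‖ = 1}`. -/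
def unitSphere (n : ℕ) : Set (EuclideanSpace ℝ (Fin n)) := {x | ‖x‖ = 1}

/-- A set `A ⊆ ℝⁿ` avoids orthogonality if `⟪a, a'⟫ ≠ 0` for all `a, a' ∈ A`. -/
def AvoidsOrthogonality {n : ℕ} (A : Set (EuclideanSpace ℝ (Fin n))) : Prop :=
  ∀ a ∈ A, ∀ a' ∈ A, ⟪a, a'⟫ ≠ 0

/-- The density `δ(A)` of a subset `A` of the unit sphere: its surface measure divided by
the total surface measure of the sphere. -/
def density (n : ℕ) (A : Set (EuclideanSpace ℝ (Fin n))) : ℝ :=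
  ((volume : Measure (EuclideanSpace ℝ (Fin n))).toSphere
      (((↑) : sphere (0 : EuclideanSpace ℝ (Fin n)) 1 → EuclideanSpace ℝ (Fin n)) ⁻¹' A)).toReal /
  ((volume : Measure (EuclideanSpace ℝ (Fin n))).toSphere Set.univ).toReal

/-- The Legendre polynomials, normalized so that `legendre k 1 = 1`:
`P₀ = 1`, `P₁(t) = t`, and `k·P_k(t) = (2k−1)·t·P_{k−1}(t) − (k−1)·P_{k−2}(t)` for `k ≥ 2`. -/
def legendre : ℕ → ℝ → ℝ
  | 0, _ => 1
  | 1, t => t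
  | (k+2), t => ((2*(k:ℝ)+3) * t * legendre (k+1) t - ((k:ℝ)+1) * legendre k t) / ((k:ℝ)+2)

/-- `I` is an independent set of the orthogonality graph `G_X` of the symmetric set
`X = {±x_1, …, ±x_N}`: no two distinct indices of `I` correspond to orthogonal points. -/
def IsIndependent {n N : ℕ} (x : Fin N → EuclideanSpace ℝ (Fin n)) (I : Finset (Fin N)) : Prop :=
  ∀ i ∈ I, ∀ j ∈ I, i ≠ j → ⟪x i, x j⟫ ≠ 0

/-- The set of points `{±x_i : i ∈ Y}`. -/
def pmSet {n N : ℕ} (x : Fin N → EuclideanSpace ℝ (Fin n)) (Y : Finset (Fin N)) :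
    Set (EuclideanSpace ℝ (Fin n)) :=
  {v | ∃ i ∈ Y, v = x i ∨ v = -x i}

/-- `Y` and `Z` are geometrically congruent: some `S ∈ O(n)` maps `{±x_i : i ∈ Y}`
onto `{±x_j : j ∈ Z}`. -/
def OrthCongruent {n N : ℕ} (x : Fin N → EuclideanSpace ℝ (Fin n)) (Y Z : Finset (Fin N)) : Prop :=
  ∃ S : OrthGroup n, act S '' pmSet x Y = pmSet x Z

/-- The atomic density `a_X(I) = μ{T ∈ O(n) : {i : x_i ∈ T(A)} = I}`. -/
def atomicDensity {n N : ℕ} (μ : Measure (OrthGroup n)) (A : Set (EuclideanSpace ℝ (Fin n)))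
    (x : Fin N → EuclideanSpace ℝ (Fin n)) (I : Finset (Fin N)) : ℝ :=
  (μ {T : OrthGroup n | {i : Fin N | x i ∈ act T '' A} = (I : Set (Fin N))}).toReal

/-- `Γ(G_X)`: the supremum of `Σ_{I ∋ 1} a(I)` over all probability distributions `a` on the
independent sets of `G_X` satisfying the geometric congruence constraints. -/
def Gamma (n N : ℕ) (hN : 0 < N) (x : Fin N → EuclideanSpace ℝ (Fin n)) : ℝ :=
  sSup {g : ℝ | ∃ a : Finset (Fin N) → ℝ,
    (∀ I, 0 ≤ a I) ∧
    (∀ I, ¬ IsIndependent x I → a I = 0) ∧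
    (∑ I ∈ Finset.univ.filter (fun I => IsIndependent x I), a I) = 1 ∧
    (∀ Y Z : Finset (Fin N), OrthCongruent x Y Z →
      (∑ I ∈ Finset.univ.filter (fun I => IsIndependent x I ∧ Y ⊆ I), a I) =
      (∑ I ∈ Finset.univ.filter (fun I => IsIndependent x I ∧ Z ⊆ I), a I)) ∧
    g = ∑ I ∈ Finset.univ.filter (fun I => IsIndependent x I ∧ (⟨0, hN⟩ : Fin N) ∈ I), a I}

/-! ### Auxiliary lemmas -/

instance matrixBorelSpace (n : ℕ) : BorelSpace (Matrix (Fin n) (Fin n) ℝ) := ⟨rfl⟩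

lemma act_mul {n : ℕ} (S T : OrthGroup n) (v : EuclideanSpace ℝ (Fin n)) :
    act (S * T) v = act S (act T v) := by
  simp [act, Matrix.toEuclideanLin_apply, Matrix.mulVec_mulVec]

lemma act_one {n : ℕ} (v : EuclideanSpace ℝ (Fin n)) : act (1 : OrthGroup n) v = v := by
  simp [act, Matrix.toEuclideanLin_apply]

lemma act_inv_act {n : ℕ} (T : OrthGroup n) (v : EuclideanSpace ℝ (Fin n)) :
    act T⁻¹ (act T v) = v := by
  rw [← act_mul, inv_mul_cancel, act_one]

lemma act_act_inv {n : ℕ} (T : OrthGroup n) (v : EuclideanSpace ℝ (Fin n)) :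
    act T (act T⁻¹ v) = v := by
  rw [← act_mul, mul_inv_cancel, act_one]

lemma mem_act_image {n : ℕ} {A : Set (EuclideanSpace ℝ (Fin n))} (T : OrthGroup n)
    (v : EuclideanSpace ℝ (Fin n)) : v ∈ act T '' A ↔ act T⁻¹ v ∈ A := by
  constructor
  · rintro ⟨a, ha, rfl⟩; rwa [act_inv_act]
  · intro h; exact ⟨act T⁻¹ v, h, act_act_inv T v⟩

lemma act_neg {n : ℕ} (T : OrthGroup n) (v : EuclideanSpace ℝ (Fin n)) :
    act T (-v) = -act T v :=
  map_neg (Matrix.toEuclideanLin (T : Matrix (Fin n) (Fin n) ℝ)) v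

lemma inner_act {n : ℕ} (T : OrthGroup n) (v w : EuclideanSpace ℝ (Fin n)) :
    ⟪act T v, act T w⟫ = ⟪v, w⟫ := by
  have h : (act T⁻¹ : EuclideanSpace ℝ (Fin n) → EuclideanSpace ℝ (Fin n)) =
      ⇑(LinearMap.adjoint (Matrix.toEuclideanLin (T : Matrix (Fin n) (Fin n) ℝ))) := by
    rw [← Matrix.toEuclideanLin_conjTranspose_eq_adjoint]
    funext u
    simp [act, Matrix.UnitaryGroup.inv_val, Matrix.star_eq_conjTranspose]
  calc ⟪act T v, act T w⟫ = ⟪v, act T⁻¹ (act T w)⟫ := by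
        rw [h]; exact (LinearMap.adjoint_inner_right _ _ _).symm
    _ = ⟪v, w⟫ := by rw [act_inv_act]

lemma measurable_act_inv {n : ℕ} (v : EuclideanSpace ℝ (Fin n)) :
    Measurable fun T : OrthGroup n => act T⁻¹ v := by
  have hg : Continuous fun M : Matrix (Fin n) (Fin n) ℝ =>
      (WithLp.equiv 2 (Fin n → ℝ)).symm (Matrix.mulVec (star M) (WithLp.equiv 2 (Fin n → ℝ) v)) :=
    (PiLp.continuous_toLp 2 (fun _ : Fin n => ℝ)).comp
      (continuous_star.matrix_mulVec continuous_const)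
  exact hg.measurable.comp measurable_subtype_coe

instance orthGroupMeasurableMul (n : ℕ) : MeasurableMul (OrthGroup n) := by
  constructor
  · intro g
    have h : Measurable fun T : OrthGroup n =>
        ((g : Matrix (Fin n) (Fin n) ℝ) * (T : Matrix (Fin n) (Fin n) ℝ)) :=
      ((continuous_const.matrix_mul continuous_id).measurable).comp measurable_subtype_coe
    exact h.subtype_mk
  · intro g
    have h : Measurable fun T : OrthGroup n =>
        ((T : Matrix (Fin n) (Fin n) ℝ) * (g : Matrix (Fin n) (Fin n) ℝ)) :=
      ((continuous_id.matrix_mul continuous_const).measurable).comp measurable_subtype_coe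
    exact h.subtype_mk

/-- Geometric invariance: if `Y` and `Z` are geometrically congruent subsets of vertices,
then the atomic densities of independent sets containing `Y` and those containing `Z`
have equal sums. -/
theorem atomicDensity_congruence (n : ℕ) (hn : 2 ≤ n) (μ : Measure (OrthGroup n))
    [μ.IsHaarMeasure] [IsProbabilityMeasure μ]
    (A : Set (EuclideanSpace ℝ (Fin n))) (hA : A ⊆ unitSphere n) (hAm : MeasurableSet A)
    (hsymm : A = -A) (horth : AvoidsOrthogonality A)
    (N : ℕ) (x : Fin N → EuclideanSpace ℝ (Fin n))
    (hx_sphere : ∀ i, x i ∈ unitSphere n)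
    (hx_distinct : ∀ i j : Fin N, i ≠ j → x i ≠ x j ∧ x i ≠ -x j)
    (Y Z : Finset (Fin N)) (hYZ : OrthCongruent x Y Z) :
    (∑ I ∈ Finset.univ.filter (fun I : Finset (Fin N) => IsIndependent x I ∧ Y ⊆ I),
      atomicDensity μ A x I) =
    (∑ I ∈ Finset.univ.filter (fun I : Finset (Fin N) => IsIndependent x I ∧ Z ⊆ I),
      atomicDensity μ A x I) := by
  classical
  obtain ⟨S, hS⟩ := hYZ
  have hneg : ∀ a ∈ A, -a ∈ A := by
    intro a ha
    rw [hsymm]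
    simpa using ha
  have hSim : ∀ i : Fin N, MeasurableSet {T : OrthGroup n | x i ∈ act T '' A} := by
    intro i
    have h : {T : OrthGroup n | x i ∈ act T '' A}
        = (fun T : OrthGroup n => act T⁻¹ (x i)) ⁻¹' A := by
      ext T; exact mem_act_image T (x i)
    rw [h]
    exact measurable_act_inv (x i) hAm
  have hsum : ∀ W : Finset (Fin N),
      (∑ I ∈ Finset.univ.filter (fun I : Finset (Fin N) => IsIndependent x I ∧ W ⊆ I),
        atomicDensity μ A x I)
      = (μ {T : OrthGroup n | ∀ i ∈ W, x i ∈ act T '' A}).toReal := by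
    intro W
    set s := Finset.univ.filter (fun I : Finset (Fin N) => IsIndependent x I ∧ W ⊆ I) with hs
    set f : Finset (Fin N) → Set (OrthGroup n) :=
      fun I => {T | {i : Fin N | x i ∈ act T '' A} = (I : Set (Fin N))} with hf
    have hfm : ∀ I : Finset (Fin N), MeasurableSet (f I) := by
      intro I
      have h : f I = ⋂ i : Fin N, {T : OrthGroup n | x i ∈ act T '' A ↔ i ∈ I} := by
        ext T
        simp only [hf, Set.mem_setOf_eq, Set.mem_iInter, Set.ext_iff, Finset.mem_coe]
      rw [h]
      refine MeasurableSet.iInter fun i => ?_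
      by_cases hi : i ∈ I
      · have h2 : {T : OrthGroup n | x i ∈ act T '' A ↔ i ∈ I}
            = {T : OrthGroup n | x i ∈ act T '' A} := by
          ext T; simp [hi]
        rw [h2]; exact hSim i
      · have h2 : {T : OrthGroup n | x i ∈ act T '' A ↔ i ∈ I}
            = {T : OrthGroup n | x i ∈ act T '' A}ᶜ := by
          ext T; simp [hi]
        rw [h2]; exact (hSim i).compl
    have hdisj : (↑s : Set (Finset (Fin N))).PairwiseDisjoint f := by
      intro I _ J _ hIJ
      refine Set.disjoint_left.mpr fun T hTI hTJ => hIJ ?_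
      have h1 : {i : Fin N | x i ∈ act T '' A} = (I : Set (Fin N)) := hTI
      have h2 : {i : Fin N | x i ∈ act T '' A} = (J : Set (Fin N)) := hTJ
      exact Finset.coe_injective (h1.symm.trans h2)
    have hunion : (⋃ I ∈ s, f I) = {T : OrthGroup n | ∀ i ∈ W, x i ∈ act T '' A} := by
      ext T
      simp only [Set.mem_iUnion, Set.mem_setOf_eq, hs, hf, Finset.mem_filter, Finset.mem_univ,
        true_and, exists_prop]
      constructor
      · rintro ⟨I, ⟨hind, hWI⟩, hE⟩ i hi
        have h2 : i ∈ {i : Fin N | x i ∈ act T '' A} := by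
          rw [hE]; exact hWI hi
        exact h2
      · intro h
        refine ⟨(Set.toFinite {i : Fin N | x i ∈ act T '' A}).toFinset, ⟨?_, ?_⟩, ?_⟩
        · intro i hi j hj hij
          rw [Set.Finite.mem_toFinset] at hi hj
          have hi' : act T⁻¹ (x i) ∈ A := (mem_act_image T (x i)).mp hi
          have hj' : act T⁻¹ (x j) ∈ A := (mem_act_image T (x j)).mp hj
          have h3 := horth _ hi' _ hj'
          rwa [inner_act T⁻¹ (x i) (x j)] at h3
        · intro i hi
          rw [Set.Finite.mem_toFinset]
          exact h i hi
        · exact (Set.Finite.coe_toFinset _).symm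
    calc (∑ I ∈ s, atomicDensity μ A x I) = ∑ I ∈ s, (μ (f I)).toReal := rfl
      _ = (∑ I ∈ s, μ (f I)).toReal := (ENNReal.toReal_sum fun I _ => measure_ne_top μ _).symm
      _ = (μ (⋃ I ∈ s, f I)).toReal := by rw [measure_biUnion_finset hdisj fun I _ => hfm I]
      _ = _ := by rw [hunion]
  rw [hsum Y, hsum Z]
  congr 1
  have key : {T : OrthGroup n | ∀ j ∈ Z, x j ∈ act T '' A}
      = (fun T : OrthGroup n => S⁻¹ * T) ⁻¹' {T : OrthGroup n | ∀ i ∈ Y, x i ∈ act T '' A} := by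
    ext T
    simp only [Set.mem_setOf_eq, Set.mem_preimage]
    constructor
    · intro hz i hi
      have hxi : act S (x i) ∈ pmSet x Z := by
        rw [← hS]; exact ⟨x i, ⟨i, hi, Or.inl rfl⟩, rfl⟩
      obtain ⟨j, hj, hcase⟩ := hxi
      rw [mem_act_image, mul_inv_rev, inv_inv, act_mul]
      have hxj : act T⁻¹ (x j) ∈ A := (mem_act_image T (x j)).mp (hz j hj)
      rcases hcase with h1 | h1
      · rw [h1]; exact hxj
      · rw [h1, act_neg]; exact hneg _ hxj
    · intro hy j hj
      have hxj : x j ∈ act S '' pmSet x Y := by rw [hS]; exact ⟨j, hj, Or.inl rfl⟩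
      obtain ⟨v, ⟨i, hi, hv⟩, hSv⟩ := hxj
      have hi' := hy i hi
      rw [mem_act_image, mul_inv_rev, inv_inv] at hi'
      rw [mem_act_image, ← hSv, ← act_mul]
      rcases hv with h1 | h1
      · rw [h1]; exact hi'
      · rw [h1, act_neg]; exact hneg _ hi'
  rw [key]
  exact (measure_preimage_mul μ S⁻¹ _).symm
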